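/- arXiv:1804.03636 — 6 statements merged into one kernel-verified Lean document; each statement's English description precedes it below -/
import Mathlib

section
/- Let p, q : ℝ^d → ℝ≥0 be measurable functions and let S ⊆ ℝ^d be a bounded open set on which p and q are integrable and on which q is constant. Suppose S is partitioned into two disjoint measurable subsets S₁ and S₂ with vol(S₁) = vol(S₂) = vol(S)/2 (where vol denotes Lebesgue measure) and such that p(s₁) ≥ p(s₂) for every s₁ ∈ S₁ and s₂ ∈ S₂. Then max( |∫_{S₁} (p(x) − q(x)) dx| , |∫_{S₂} (p(x) − q(x)) dx| ) ≥ (1/4) · ∫_S |p(x) − q(x)| dx. -/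
/-! Let `t` separate the values of `f = p - q` on the two halves, `f ≥ t` on `S₁` and `f ≤ t` on
`S₂`, and write `A`, `B` for the integrals of `f` over `S₁`, `S₂`. If `t ≥ 0`, then `|f| = f` on
`S₁`, while `|f| ≤ 2t - f` on `S₂`; since the halves have equal measure `m`, `t m ≤ A`, so
`∫_S |f| ≤ A + 2tm - B ≤ 3A - B ≤ 4 max(|A|, |B|)`. The case `t ≤ 0` is the same after replacing
`f` by `-f` and swapping the halves. -/

open MeasureTheory Set

theorem exists_separating_of_forall_le {α : Type*} {f : α → ℝ} {S₁ S₂ : Set α}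
    (hne₁ : S₁.Nonempty) (hne₂ : S₂.Nonempty)
    (hord : ∀ x₁ ∈ S₁, ∀ x₂ ∈ S₂, f x₂ ≤ f x₁) :
    ∃ t, (∀ x ∈ S₁, t ≤ f x) ∧ ∀ x ∈ S₂, f x ≤ t := by
  obtain ⟨x₁, hx₁⟩ := hne₁
  have hbdd : BddAbove (f '' S₂) := ⟨f x₁, forall_mem_image.2 fun x hx => hord x₁ hx₁ x hx⟩
  exact ⟨sSup (f '' S₂),
    fun x hx => csSup_le (hne₂.image f) (forall_mem_image.2 fun y hy => hord x hx y hy),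
    fun x hx => le_csSup hbdd (mem_image_of_mem f hx)⟩

section

variable {α : Type*} [MeasurableSpace α] {μ : Measure α} {f : α → ℝ} {S₁ S₂ : Set α}

theorem setIntegral_union_abs_le_of_separating_nonneg (hS₁ : MeasurableSet S₁)
    (hS₂ : MeasurableSet S₂) (hdisj : Disjoint S₁ S₂) (hμ : μ S₁ = μ S₂) (hfin : μ S₁ ≠ ⊤)
    (hf : IntegrableOn f (S₁ ∪ S₂) μ) {t : ℝ} (ht : 0 ≤ t) (ht₁ : ∀ x ∈ S₁, t ≤ f x)
    (ht₂ : ∀ x ∈ S₂, f x ≤ t) :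
    ∫ x in S₁ ∪ S₂, |f x| ∂μ ≤ 3 * ∫ x in S₁, f x ∂μ - ∫ x in S₂, f x ∂μ := by
  have hf₁ : IntegrableOn f S₁ μ := hf.mono_set subset_union_left
  have hf₂ : IntegrableOn f S₂ μ := hf.mono_set subset_union_right
  have hconst : IntegrableOn (fun _ => 2 * t) S₂ μ := integrableOn_const (hμ ▸ hfin)
  have habs₁ : ∫ x in S₁, |f x| ∂μ = ∫ x in S₁, f x ∂μ :=
    setIntegral_congr_fun hS₁ fun x hx => abs_of_nonneg (ht.trans (ht₁ x hx))
  have habs₂ : ∫ x in S₂, |f x| ∂μ ≤ 2 * t * μ.real S₂ - ∫ x in S₂, f x ∂μ :=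
    calc ∫ x in S₂, |f x| ∂μ ≤ ∫ x in S₂, (2 * t - f x) ∂μ :=
          setIntegral_mono_on hf₂.abs (hconst.sub hf₂) hS₂ fun x hx =>
            abs_le'.2 ⟨by linarith [ht₂ x hx], by linarith⟩
      _ = 2 * t * μ.real S₂ - ∫ x in S₂, f x ∂μ := by
          rw [integral_sub hconst hf₂, setIntegral_const, smul_eq_mul, mul_comm]
  have hlow : t * μ.real S₁ ≤ ∫ x in S₁, f x ∂μ := setIntegral_ge_of_const_le_real hS₁ hfin ht₁ hf₁
  rw [measureReal_def, hμ, ← measureReal_def] at hlow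
  rw [setIntegral_union hdisj hS₂ hf₁.abs hf₂.abs, habs₁]
  linarith

theorem setIntegral_union_abs_le_four_mul_max (hS₁ : MeasurableSet S₁) (hS₂ : MeasurableSet S₂)
    (hdisj : Disjoint S₁ S₂) (hμ : μ S₁ = μ S₂) (hfin : μ S₁ ≠ ⊤)
    (hf : IntegrableOn f (S₁ ∪ S₂) μ) (hord : ∀ x₁ ∈ S₁, ∀ x₂ ∈ S₂, f x₂ ≤ f x₁) :
    ∫ x in S₁ ∪ S₂, |f x| ∂μ ≤ 4 * max |∫ x in S₁, f x ∂μ| |∫ x in S₂, f x ∂μ| := by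
  rcases S₁.eq_empty_or_nonempty with rfl | hne₁
  · rw [setIntegral_measure_zero _ (by simp [← hμ])]
    positivity
  rcases S₂.eq_empty_or_nonempty with rfl | hne₂
  · rw [setIntegral_measure_zero _ (by simp [hμ])]
    positivity
  obtain ⟨t, ht₁, ht₂⟩ := exists_separating_of_forall_le hne₁ hne₂ hord
  have hA := (le_abs_self _).trans (le_max_left |∫ x in S₁, f x ∂μ| |∫ x in S₂, f x ∂μ|)
  have hB := (neg_le_abs _).trans (le_max_right |∫ x in S₁, f x ∂μ| |∫ x in S₂, f x ∂μ|)
  rcases le_total 0 t with ht | ht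
  · have key := setIntegral_union_abs_le_of_separating_nonneg hS₁ hS₂ hdisj hμ hfin hf ht ht₁ ht₂
    linarith
  · have key := setIntegral_union_abs_le_of_separating_nonneg (f := fun x => -f x) hS₂ hS₁
      hdisj.symm hμ.symm (hμ ▸ hfin) (union_comm S₁ S₂ ▸ hf.neg) (neg_nonneg.2 ht)
      (fun x hx => neg_le_neg (ht₂ x hx)) (fun x hx => neg_le_neg (ht₁ x hx))
    simp only [abs_neg, integral_neg, union_comm S₂ S₁] at key
    linarith

end

theorem split_capturing_general
    {d : ℕ} (p q : (Fin d → ℝ) → ℝ)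
    (S : Set (Fin d → ℝ)) (hSbdd : Bornology.IsBounded S)
    (hpint : IntegrableOn p S volume) (hqint : IntegrableOn q S volume)
    (hqconst : ∃ c : ℝ, ∀ x ∈ S, q x = c)
    (S₁ S₂ : Set (Fin d → ℝ)) (hS₁m : MeasurableSet S₁) (hS₂m : MeasurableSet S₂)
    (hdisj : Disjoint S₁ S₂) (hunion : S₁ ∪ S₂ = S)
    (hvol₁ : volume S₁ = volume S / 2) (hvol₂ : volume S₂ = volume S / 2)
    (hord : ∀ s₁ ∈ S₁, ∀ s₂ ∈ S₂, p s₂ ≤ p s₁) :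
    (1 / 4 : ℝ) * ∫ x in S, |p x - q x| ≤
      max |∫ x in S₁, (p x - q x)| |∫ x in S₂, (p x - q x)| := by
  obtain ⟨c, hc⟩ := hqconst
  subst hunion
  have hfin : volume S₁ ≠ ⊤ :=
    ((measure_mono subset_union_left).trans_lt hSbdd.measure_lt_top).ne
  have key := setIntegral_union_abs_le_four_mul_max (f := fun x => p x - q x) hS₁m hS₂m hdisj
    (hvol₁.trans hvol₂.symm) hfin (hpint.sub hqint) fun x₁ hx₁ x₂ hx₂ => by
      rw [hc x₁ (Or.inl hx₁), hc x₂ (Or.inr hx₂)]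
      linarith [hord x₁ hx₁ x₂ hx₂]
  linarith

theorem split_capturing
    {d : ℕ} (p q : (Fin d → ℝ) → ℝ) (hpm : Measurable p) (hqm : Measurable q)
    (hp0 : ∀ x, 0 ≤ p x) (hq0 : ∀ x, 0 ≤ q x)
    (S : Set (Fin d → ℝ)) (hSopen : IsOpen S) (hSbdd : Bornology.IsBounded S)
    (hpint : IntegrableOn p S volume) (hqint : IntegrableOn q S volume)
    (hqconst : ∃ c : ℝ, ∀ x ∈ S, q x = c)
    (S₁ S₂ : Set (Fin d → ℝ)) (hS₁m : MeasurableSet S₁) (hS₂m : MeasurableSet S₂)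
    (hdisj : Disjoint S₁ S₂) (hunion : S₁ ∪ S₂ = S)
    (hvol₁ : volume S₁ = volume S / 2) (hvol₂ : volume S₂ = volume S / 2)
    (hord : ∀ s₁ ∈ S₁, ∀ s₂ ∈ S₂, p s₂ ≤ p s₁) :
    (1 / 4 : ℝ) * ∫ x in S, |p x - q x| ≤
      max |∫ x in S₁, (p x - q x)| |∫ x in S₂, (p x - q x)| :=
  split_capturing_general p q S hSbdd hpint hqint hqconst S₁ S₂ hS₁m hS₂m hdisj hunion hvol₁ hvol₂
    hord
end

section
/- Let p, q : ℝ^d → ℝ≥0 be measurable functions and let S ⊆ ℝ^d be a bounded open set on which p and q are integrable and on which q is constant. Suppose S is partitioned into two disjoint measurable subsets S₁ and S₂ with vol(S₁) = vol(S₂) = vol(S)/2 (where vol denotes Lebesgue measure) and such that p(s₁) ≥ p(s₂) for every s₁ ∈ S₁ and s₂ ∈ S₂. Let W = { x ∈ S : p(x) ≥ q(x) }. Then max( |∫_{S₁} (p(x) − q(x)) dx| , |∫_{S₂} (p(x) − q(x)) dx| ) ≥ (1/2) · ∫_W (p(x) − q(x)) dx. -/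
/-!
Let `c` be the value of `q` on `S`. Some level `t` separates the values of `p` on `S₂` (below)
from those on `S₁` (above). If `t ≥ c`, then `S₁ ⊆ W` and the part of `W` inside `S₂` carries at
most `vol(S₂) (t - c) ≤ ∫_{S₁} (p - c)`, so `∫_W (p - q) ≤ 2 ∫_{S₁} (p - q)`. If `t < c`, then
`W ⊆ S₁` and the rest of `S₁` carries at least `vol(S₁ \ W) (t - c) ≥ ∫_{S₂} (p - c)`, so
`∫_W (p - q) ≤ ∫_{S₁} (p - q) - ∫_{S₂} (p - q)`.
-/

open MeasureTheory

section

variable {X : Type*} [MeasurableSpace X] {μ : Measure X} {f : X → ℝ}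

theorem setIntegral_le_setIntegral_of_le_of_le {s t : Set X} {c : ℝ}
    (hs : MeasurableSet s) (ht : MeasurableSet t) (hμs : μ s ≠ ⊤) (hμt : μ t ≠ ⊤)
    (hfs : IntegrableOn f s μ) (hft : IntegrableOn f t μ)
    (hf_s : ∀ x ∈ s, f x ≤ c) (hf_t : ∀ x ∈ t, c ≤ f x) (hμ : c * μ.real s ≤ c * μ.real t) :
    ∫ x in s, f x ∂μ ≤ ∫ x in t, f x ∂μ :=
  calc ∫ x in s, f x ∂μ ≤ ∫ _ in s, c ∂μ := setIntegral_mono_on hfs (integrableOn_const hμs) hs hf_s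
    _ = c * μ.real s := by rw [setIntegral_const, smul_eq_mul, mul_comm]
    _ ≤ c * μ.real t := hμ
    _ ≤ ∫ x in t, f x ∂μ := setIntegral_ge_of_const_le_real ht hμt hf_t hft

theorem half_setIntegral_nonneg_le_max_abs_setIntegral_of_separated {s₁ s₂ : Set X} {c : ℝ}
    (hs₁ : MeasurableSet s₁) (hs₂ : MeasurableSet s₂) (hdisj : Disjoint s₁ s₂)
    (hμ : μ s₁ = μ s₂) (hμ_fin : μ s₁ ≠ ⊤) (hf : Measurable f)
    (hfi : IntegrableOn f (s₁ ∪ s₂) μ) (hf₁ : ∀ x ∈ s₁, c ≤ f x) (hf₂ : ∀ y ∈ s₂, f y ≤ c) :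
    (1 / 2 : ℝ) * ∫ x in {x ∈ s₁ ∪ s₂ | 0 ≤ f x}, f x ∂μ ≤
      max |∫ x in s₁, f x ∂μ| |∫ x in s₂, f x ∂μ| := by
  set P := {x | 0 ≤ f x}
  have hP : MeasurableSet P := measurableSet_le measurable_const hf
  have hμ₂_fin : μ s₂ ≠ ⊤ := hμ ▸ hμ_fin
  have hμr : μ.real s₁ = μ.real s₂ := congrArg ENNReal.toReal hμ
  have hfi₁ : IntegrableOn f s₁ μ := hfi.mono_set Set.subset_union_left
  have hfi₂ : IntegrableOn f s₂ μ := hfi.mono_set Set.subset_union_right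
  have hW : ∫ x in {x ∈ s₁ ∪ s₂ | 0 ≤ f x}, f x ∂μ =
      ∫ x in s₁ ∩ P, f x ∂μ + ∫ x in s₂ ∩ P, f x ∂μ := by
    rw [← setIntegral_union (hdisj.mono Set.inter_subset_left Set.inter_subset_left)
      (hs₂.inter hP) (hfi₁.mono_set Set.inter_subset_left) (hfi₂.mono_set Set.inter_subset_left),
      ← Set.union_inter_distrib_right]
    rfl
  have h₁ := le_abs_self (∫ x in s₁, f x ∂μ)
  have h₂ := neg_abs_le (∫ x in s₂, f x ∂μ)
  have hmax₁ := le_max_left |∫ x in s₁, f x ∂μ| |∫ x in s₂, f x ∂μ|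
  have hmax₂ := le_max_right |∫ x in s₁, f x ∂μ| |∫ x in s₂, f x ∂μ|
  rcases le_or_gt 0 c with hc | hc
  · have hs₁P : s₁ ∩ P = s₁ := Set.inter_eq_left.2 fun x hx => hc.trans (hf₁ x hx)
    have : ∫ x in s₂ ∩ P, f x ∂μ ≤ ∫ x in s₁, f x ∂μ :=
      setIntegral_le_setIntegral_of_le_of_le (hs₂.inter hP) hs₁
        (measure_ne_top_of_subset Set.inter_subset_left hμ₂_fin) hμ_fin
        (hfi₂.mono_set Set.inter_subset_left) hfi₁ (fun x hx => hf₂ x hx.1) hf₁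
        (mul_le_mul_of_nonneg_left (hμr ▸ measureReal_mono Set.inter_subset_left hμ₂_fin) hc)
    rw [hW, hs₁P]
    linarith
  · have hs₂P : s₂ ∩ P = ∅ :=
      Set.eq_empty_of_forall_notMem fun x hx => (hf₂ x hx.1).not_gt (hc.trans_le hx.2)
    have : ∫ x in s₂, f x ∂μ ≤ ∫ x in s₁ \ P, f x ∂μ :=
      setIntegral_le_setIntegral_of_le_of_le hs₂ (hs₁.diff hP) hμ₂_fin
        (measure_ne_top_of_subset Set.sdiff_subset hμ_fin) hfi₂ (hfi₁.mono_set Set.sdiff_subset)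
        hf₂ (fun x hx => hf₁ x hx.1)
        (mul_le_mul_of_nonpos_left (hμr ▸ measureReal_mono Set.sdiff_subset hμ_fin) hc.le)
    have hsplit := integral_inter_add_sdiff hP hfi₁
    rw [hW, hs₂P, setIntegral_empty]
    linarith

theorem half_setIntegral_nonneg_le_max_abs_setIntegral {s₁ s₂ : Set X}
    (hs₁ : MeasurableSet s₁) (hs₂ : MeasurableSet s₂) (hdisj : Disjoint s₁ s₂)
    (hμ : μ s₁ = μ s₂) (hμ_fin : μ s₁ ≠ ⊤) (hf : Measurable f)
    (hfi : IntegrableOn f (s₁ ∪ s₂) μ) (hord : ∀ x ∈ s₁, ∀ y ∈ s₂, f y ≤ f x) :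
    (1 / 2 : ℝ) * ∫ x in {x ∈ s₁ ∪ s₂ | 0 ≤ f x}, f x ∂μ ≤
      max |∫ x in s₁, f x ∂μ| |∫ x in s₂, f x ∂μ| := by
  by_cases h0 : μ s₁ = 0
  · have hW0 : μ {x ∈ s₁ ∪ s₂ | 0 ≤ f x} = 0 :=
      measure_mono_null (fun x hx => hx.1) (measure_union_null h0 (hμ ▸ h0))
    rw [setIntegral_measure_zero f hW0, setIntegral_measure_zero f h0,
      setIntegral_measure_zero f (hμ ▸ h0)]
    simp
  obtain ⟨c, hc₂, hc₁⟩ := exists_between_of_forall_le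
    ((nonempty_of_measure_ne_zero (hμ ▸ h0 : μ s₂ ≠ 0)).image f)
    ((nonempty_of_measure_ne_zero h0).image f)
    (by rintro _ ⟨y, hy, rfl⟩ _ ⟨x, hx, rfl⟩; exact hord x hx y hy)
  exact half_setIntegral_nonneg_le_max_abs_setIntegral_of_separated hs₁ hs₂ hdisj hμ hμ_fin hf
    hfi (fun x hx => hc₁ ⟨x, hx, rfl⟩) (fun y hy => hc₂ ⟨y, hy, rfl⟩)

end

theorem split_capturing_half_general
    {d : ℕ} (p q : (Fin d → ℝ) → ℝ) (hpm : Measurable p) (hqm : Measurable q)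
    (S : Set (Fin d → ℝ)) (hSbdd : Bornology.IsBounded S)
    (hpint : IntegrableOn p S volume) (hqint : IntegrableOn q S volume)
    (hqconst : ∃ c : ℝ, ∀ x ∈ S, q x = c)
    (S₁ S₂ : Set (Fin d → ℝ)) (hS₁m : MeasurableSet S₁) (hS₂m : MeasurableSet S₂)
    (hdisj : Disjoint S₁ S₂) (hunion : S₁ ∪ S₂ = S)
    (hvol₁ : volume S₁ = volume S / 2) (hvol₂ : volume S₂ = volume S / 2)
    (hord : ∀ s₁ ∈ S₁, ∀ s₂ ∈ S₂, p s₂ ≤ p s₁) :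
    (1 / 2 : ℝ) * ∫ x in {x ∈ S | q x ≤ p x}, (p x - q x) ≤
      max |∫ x in S₁, (p x - q x)| |∫ x in S₂, (p x - q x)| := by
  obtain ⟨c, hc⟩ := hqconst
  subst hunion
  have hfin : volume S₁ ≠ ⊤ :=
    (measure_mono Set.subset_union_left).trans_lt hSbdd.measure_lt_top |>.ne
  have hord' : ∀ x ∈ S₁, ∀ y ∈ S₂, p y - q y ≤ p x - q x := fun x hx y hy => by
    rw [hc x (.inl hx), hc y (.inr hy)]
    exact sub_le_sub_right (hord x hx y hy) c
  simpa only [sub_nonneg] using half_setIntegral_nonneg_le_max_abs_setIntegral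
    (f := fun x => p x - q x) hS₁m hS₂m hdisj (hvol₁.trans hvol₂.symm) hfin (hpm.sub hqm)
    (hpint.sub hqint) hord'

theorem split_capturing_half
    {d : ℕ} (p q : (Fin d → ℝ) → ℝ) (hpm : Measurable p) (hqm : Measurable q)
    (hp0 : ∀ x, 0 ≤ p x) (hq0 : ∀ x, 0 ≤ q x)
    (S : Set (Fin d → ℝ)) (hSopen : IsOpen S) (hSbdd : Bornology.IsBounded S)
    (hpint : IntegrableOn p S volume) (hqint : IntegrableOn q S volume)
    (hqconst : ∃ c : ℝ, ∀ x ∈ S, q x = c)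
    (S₁ S₂ : Set (Fin d → ℝ)) (hS₁m : MeasurableSet S₁) (hS₂m : MeasurableSet S₂)
    (hdisj : Disjoint S₁ S₂) (hunion : S₁ ∪ S₂ = S)
    (hvol₁ : volume S₁ = volume S / 2) (hvol₂ : volume S₂ = volume S / 2)
    (hord : ∀ s₁ ∈ S₁, ∀ s₂ ∈ S₂, p s₂ ≤ p s₁) :
    (1 / 2 : ℝ) * ∫ x in {x ∈ S | q x ≤ p x}, (p x - q x) ≤
      max |∫ x in S₁, (p x - q x)| |∫ x in S₂, (p x - q x)| :=
  split_capturing_half_general p q hpm hqm S hSbdd hpint hqint hqconst S₁ S₂ hS₁m hS₂m hdisj hunion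
    hvol₁ hvol₂ hord
end

section
/- Let d, k ≥ 1 be integers, let 0 < ε ≤ 1, and let p be a probability measure on [0,1]^d each of whose d one-dimensional coordinate marginals is atomless. Set m = ⌈log₂(4kd/ε)⌉. Then there exists a (k, 2^d·m^d, m^d, ε)-oblivious covering of p. -/
open MeasureTheory
open scoped Classical

noncomputable section

/-- The unit cube `[0,1]^d` in `ℝ^d`. -/
def unitCube (d : ℕ) : Set (Fin d → ℝ) := Set.univ.pi fun _ => Set.Icc (0 : ℝ) 1

/-- An axis-aligned rectangle: a product of intervals. -/
def IsAxisRect {d : ℕ} (R : Set (Fin d → ℝ)) : Prop :=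
  ∃ I : Fin d → Set ℝ, (∀ j, (I j).OrdConnected) ∧ R = Set.univ.pi I

/-- A `(k, j, ℓ, ε)`-oblivious covering of a measure `P` on `[0,1]^d`: a finite family `F` of
measurable subsets of the cube such that every point of the cube lies in exactly `ℓ` members of
`F`, and for every partition of the cube into `k` axis-aligned rectangles there is a pairwise
disjoint subfamily of at most `k·j` members, covering all but `ε` of the `P`-mass,
each member being contained in some rectangle of the partition. -/
def IsObliviousCovering (d k j ℓ : ℕ) (ε : ℝ) (P : Measure (Fin d → ℝ))
    (F : Finset (Set (Fin d → ℝ))) : Prop :=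
  (∀ S ∈ F, MeasurableSet S) ∧
  (∀ x ∈ unitCube d, (F.filter fun S => x ∈ S).card = ℓ) ∧
  ∀ R : Fin k → Set (Fin d → ℝ),
    (∀ i, IsAxisRect (R i)) → Set.univ.PairwiseDisjoint R → (⋃ i, R i) = unitCube d →
      ∃ Sf : Finset (Set (Fin d → ℝ)), Sf ⊆ F ∧ Sf.card ≤ k * j ∧
        (Sf : Set (Set (Fin d → ℝ))).Pairwise (Disjoint · ·) ∧
        ENNReal.ofReal (1 - ε) ≤ P (⋃₀ ↑Sf) ∧
        ∀ S ∈ Sf, ∃ i, S ⊆ R i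

/-!
Cut each coordinate axis at the `2 ^ m`-quantiles of the corresponding marginal: since the
marginal is atomless its cdf is continuous, so there are `2 ^ m` nonempty cells, each of mass
`2 ^ (-m)`. The covering consists of the products of dyadic blocks of cells, one dyadic level
`< m` per coordinate; a point of the cube lies in exactly one such box for each choice of levels.
Given a rectangle `∏ I_j` of the partition, every cell strictly between the two extreme cells met
by `I_j` lies inside `I_j`, and this range of cells splits into at most `2 m` dyadic blocks. Their
products are at most `(2 m) ^ d` disjoint boxes inside the rectangle, missing only points in one of the
`2 d` extreme cells, so over `k` rectangles the missed mass is at most `2 k d / 2 ^ m ≤ ε`.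
-/

open Set ProbabilityTheory

/-- The cap at `N - 1` puts the points where `cdf μ = 1` into the last of the `N` cells. -/
def quantileRank (μ : Measure ℝ) (N : ℕ) (x : ℝ) : ℕ := min ⌊N * cdf μ x⌋₊ (N - 1)

structure IsQuantileRank (μ : Measure ℝ) (N : ℕ) (r : ℝ → ℕ) : Prop where
  monotone : Monotone r
  lt : ∀ x, r x < N
  surjOn : ∀ n < N, ∃ x ∈ Icc (0 : ℝ) 1, r x = n
  measure_preimage_le : ∀ n, μ (r ⁻¹' {n}) ≤ ENNReal.ofReal (1 / N)

section QuantileRank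

variable {μ : Measure ℝ} {N : ℕ}

lemma cdf_mem_Icc_of_quantileRank_eq (hN : 0 < N) {x : ℝ} {n : ℕ} (h : quantileRank μ N x = n) :
    cdf μ x ∈ Icc ((n : ℝ) / N) ((n + 1) / N) := by
  have hNR : (0 : ℝ) < N := by exact_mod_cast hN
  rw [quantileRank, min_eq_iff] at h
  rw [mem_Icc, div_le_iff₀ hNR, le_div_iff₀ hNR]
  have hfloor : (n : ℝ) ≤ N * cdf μ x := by
    rw [← Nat.le_floor_iff (mul_nonneg hNR.le (cdf_nonneg μ x))]
    omega
  refine ⟨by linarith, ?_⟩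
  rcases h with ⟨h, -⟩ | ⟨h, -⟩
  · have := Nat.lt_floor_add_one (N * cdf μ x)
    rw [h] at this
    linarith
  · have : (n : ℝ) + 1 = N := by exact_mod_cast (by omega : n + 1 = N)
    nlinarith [cdf_le_one μ x]

variable [IsProbabilityMeasure μ]

lemma cdf_one_of_measure_Icc (h01 : μ (Icc 0 1) = 1) : cdf μ 1 = 1 := by
  have : μ (Iic 1) = 1 := le_antisymm prob_le_one (h01 ▸ measure_mono Icc_subset_Iic_self)
  rw [cdf_eq_real, measureReal_def, this, ENNReal.toReal_one]

variable [NullSingletonClass μ]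

lemma cdf_zero_of_measure_Icc (h01 : μ (Icc 0 1) = 1) : cdf μ 0 = 0 := by
  have hout : μ (Icc (0 : ℝ) 1)ᶜ = 0 := (prob_compl_eq_zero_iff measurableSet_Icc).2 h01
  have hsub : Iic (0 : ℝ) ⊆ {0} ∪ (Icc 0 1)ᶜ := fun x hx => by
    rcases (mem_Iic.1 hx).eq_or_lt with h | h
    · exact Or.inl h
    · exact Or.inr fun h' => h.not_ge h'.1
  have : μ (Iic 0) = 0 :=
    measure_mono_null hsub (measure_union_null (measure_singleton 0) hout)
  rw [cdf_eq_real, measureReal_def, this, ENNReal.toReal_zero]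

lemma continuous_cdf : Continuous (cdf μ) := by
  refine continuous_iff_continuousAt.2 fun x => ?_
  have hjump : ENNReal.ofReal (cdf μ x - Function.leftLim (cdf μ) x) = 0 := by
    rw [← StieltjesFunction.measure_singleton, measure_cdf, measure_singleton]
  have hleft := (cdf μ).mono.leftLim_le (le_refl x)
  rw [(cdf μ).mono.continuousAt_iff_leftLim_eq_rightLim, (cdf μ).rightLim_eq]
  rw [ENNReal.ofReal_eq_zero] at hjump
  linarith

lemma measure_Icc_eq_cdf_sub (s t : ℝ) : μ (Icc s t) = ENNReal.ofReal (cdf μ t - cdf μ s) := by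
  have h := (cdf μ).measure_Ioc s t
  rwa [measure_cdf, measure_congr Ioc_ae_eq_Icc] at h

lemma measure_Icc_inter_preimage_cdf_le (a b : ℝ) :
    μ (Icc 0 1 ∩ cdf μ ⁻¹' Icc a b) ≤ ENNReal.ofReal (b - a) := by
  set K := Icc 0 1 ∩ cdf μ ⁻¹' Icc a b
  have hK : IsCompact K := isCompact_Icc.inter_right (isClosed_Icc.preimage continuous_cdf)
  rcases K.eq_empty_or_nonempty with hempty | hne
  · simp [hempty]
  obtain ⟨-, hs⟩ := hK.sInf_mem hne
  obtain ⟨-, ht⟩ := hK.sSup_mem hne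
  calc μ K ≤ μ (Icc (sInf K) (sSup K)) :=
        measure_mono (subset_Icc_csInf_csSup hK.bddBelow hK.bddAbove)
    _ = ENNReal.ofReal (cdf μ (sSup K) - cdf μ (sInf K)) := measure_Icc_eq_cdf_sub _ _
    _ ≤ ENNReal.ofReal (b - a) := ENNReal.ofReal_le_ofReal (by linarith [hs.1, ht.2])

theorem isQuantileRank_quantileRank (h01 : μ (Icc 0 1) = 1) (hN : 0 < N) :
    IsQuantileRank μ N (quantileRank μ N) where
  monotone _ _ hxy := min_le_min_right _ <| Nat.floor_le_floor <|
    mul_le_mul_of_nonneg_left (monotone_cdf μ hxy) (Nat.cast_nonneg N)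
  lt _ := (min_le_right _ _).trans_lt (Nat.sub_lt hN one_pos)
  surjOn n hn := by
    have hNR : (0 : ℝ) < N := by exact_mod_cast hN
    have hmem : (n : ℝ) / N ∈ Icc (cdf μ 0) (cdf μ 1) := by
      rw [cdf_zero_of_measure_Icc h01, cdf_one_of_measure_Icc h01, mem_Icc, div_le_one hNR]
      exact ⟨by positivity, by exact_mod_cast hn.le⟩
    obtain ⟨x, hx, hcdf⟩ := intermediate_value_Icc zero_le_one continuous_cdf.continuousOn hmem
    refine ⟨x, hx, ?_⟩
    rw [quantileRank, hcdf, mul_div_cancel₀ _ hNR.ne', Nat.floor_natCast]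
    omega
  measure_preimage_le n := by
    have hout : μ (Icc (0 : ℝ) 1)ᶜ = 0 := (prob_compl_eq_zero_iff measurableSet_Icc).2 h01
    have hsub : quantileRank μ N ⁻¹' {n} ⊆
        (Icc 0 1)ᶜ ∪ Icc 0 1 ∩ cdf μ ⁻¹' Icc ((n : ℝ) / N) ((n + 1) / N) := fun x hx => by
      by_cases hx01 : x ∈ Icc (0 : ℝ) 1
      · exact Or.inr ⟨hx01, cdf_mem_Icc_of_quantileRank_eq hN hx⟩
      · exact Or.inl hx01
    calc μ (quantileRank μ N ⁻¹' {n})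
        ≤ μ (Icc 0 1)ᶜ + μ (Icc 0 1 ∩ cdf μ ⁻¹' Icc ((n : ℝ) / N) ((n + 1) / N)) :=
          (measure_mono hsub).trans (measure_union_le _ _)
      _ ≤ ENNReal.ofReal (1 / N) := by
          rw [hout, zero_add]
          refine (measure_Icc_inter_preimage_cdf_le _ _).trans_eq ?_
          congr 1
          ring

end QuantileRank

lemma Nat.div_two_pow_succ (n s : ℕ) : n / 2 ^ (s + 1) = n / 2 / 2 ^ s := by
  rw [pow_succ', Nat.div_div_eq_div_mul]

/-- A pair `(s, c)` encodes the dyadic block `{n | n / 2 ^ s = c}`, i.e.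
`[c * 2 ^ s, (c + 1) * 2 ^ s)`. -/
structure IsDyadicDecomposition (m α β : ℕ) (D : Finset (ℕ × ℕ)) : Prop where
  subset : D ⊆ Finset.range m ×ˢ Finset.range (2 ^ m)
  card_le : D.card ≤ 2 * m
  mem_Ico : ∀ q ∈ D, ∀ n, n / 2 ^ q.1 = q.2 → α ≤ n ∧ n < β
  exists_mem : ∀ n, α ≤ n → n < β → ∃ q ∈ D, n / 2 ^ q.1 = q.2
  eq_of_mem : ∀ q ∈ D, ∀ q' ∈ D, ∀ n, n / 2 ^ q.1 = q.2 → n / 2 ^ q'.1 = q'.2 → q = q'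

namespace IsDyadicDecomposition

lemma one {α β : ℕ} (hβ : β ≤ 2) :
    IsDyadicDecomposition 1 α β ((Finset.Ico α β).image fun n => (0, n)) where
  subset := by
    intro q hq
    obtain ⟨n, hn, rfl⟩ := Finset.mem_image.1 hq
    simp only [Finset.mem_Ico] at hn
    simp only [Finset.mem_product, Finset.mem_range]
    omega
  card_le := Finset.card_image_le.trans (by simp only [Nat.card_Ico]; omega)
  mem_Ico q hq n hn := by
    obtain ⟨n', hn', rfl⟩ := Finset.mem_image.1 hq
    simp only [pow_zero, Nat.div_one] at hn
    exact hn ▸ Finset.mem_Ico.1 hn'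
  exists_mem n hα hβ := ⟨(0, n), Finset.mem_image_of_mem _ (Finset.mem_Ico.2 ⟨hα, hβ⟩), by simp⟩
  eq_of_mem q hq q' hq' n hn hn' := by
    obtain ⟨a, -, rfl⟩ := Finset.mem_image.1 hq
    obtain ⟨b, -, rfl⟩ := Finset.mem_image.1 hq'
    simp only [pow_zero, Nat.div_one] at hn hn'
    rw [← hn, ← hn']

/-- The blocks of level `0` handle the (at most two) ends of `[α, β)` not covered by the halved
interval `[⌈α/2⌉, ⌊β/2⌋)`, whose decomposition is lifted one level up. -/
lemma succ {m α β : ℕ} {D : Finset (ℕ × ℕ)} (hD : IsDyadicDecomposition m ((α + 1) / 2) (β / 2) D)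
    (hβ : β ≤ 2 ^ (m + 1)) : ∃ D', IsDyadicDecomposition (m + 1) α β D' := by
  set E := ({α, β - 1} : Finset ℕ).filter
    fun n => α ≤ n ∧ n < β ∧ (n < 2 * ((α + 1) / 2) ∨ 2 * (β / 2) ≤ n)
  have hpow : 2 ^ (m + 1) = 2 * 2 ^ m := pow_succ' 2 m
  refine ⟨E.image (fun n => (0, n)) ∪ D.image (fun q => (q.1 + 1, q.2)),
    ?subset, ?card_le, ?mem_Ico, ?exists_mem, ?eq_of_mem⟩
  case subset =>
    intro q hq
    simp only [Finset.mem_union, Finset.mem_image] at hq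
    simp only [Finset.mem_product, Finset.mem_range]
    rcases hq with ⟨n, hn, rfl⟩ | ⟨q, hq, rfl⟩
    · have := (Finset.mem_filter.1 hn).2
      omega
    · have := Finset.mem_product.1 (hD.subset hq)
      simp only [Finset.mem_range] at this
      omega
  case card_le =>
    calc _ ≤ E.card + D.card :=
          (Finset.card_union_le _ _).trans (add_le_add Finset.card_image_le Finset.card_image_le)
      _ ≤ 2 + 2 * m := add_le_add ((Finset.card_filter_le _ _).trans Finset.card_le_two) hD.card_le
      _ = 2 * (m + 1) := by ring
  case mem_Ico =>
    intro q hq n hn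
    simp only [Finset.mem_union, Finset.mem_image] at hq
    rcases hq with ⟨a, ha, rfl⟩ | ⟨q, hq, rfl⟩
    · simp only [pow_zero, Nat.div_one] at hn
      have := (Finset.mem_filter.1 ha).2
      omega
    · rw [Nat.div_two_pow_succ] at hn
      have := hD.mem_Ico q hq (n / 2) hn
      omega
  case exists_mem =>
    intro n hα hβ
    by_cases hend : n < 2 * ((α + 1) / 2) ∨ 2 * (β / 2) ≤ n
    · refine ⟨(0, n), Finset.mem_union_left _ (Finset.mem_image_of_mem _ ?_), by simp⟩
      simp only [E, Finset.mem_filter, Finset.mem_insert, Finset.mem_singleton]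
      omega
    · obtain ⟨q, hq, hnq⟩ := hD.exists_mem (n / 2) (by omega) (by omega)
      refine ⟨(q.1 + 1, q.2), Finset.mem_union_right _ (Finset.mem_image_of_mem _ hq), ?_⟩
      rwa [Nat.div_two_pow_succ]
  case eq_of_mem =>
    intro q hq q' hq' n hn hn'
    simp only [Finset.mem_union, Finset.mem_image] at hq hq'
    rcases hq with ⟨a, ha, rfl⟩ | ⟨q, hq, rfl⟩ <;> rcases hq' with ⟨b, hb, rfl⟩ | ⟨q', hq', rfl⟩
    all_goals simp only [pow_zero, Nat.div_one, Nat.div_two_pow_succ] at hn hn'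
    · rw [← hn, ← hn']
    · have := (Finset.mem_filter.1 ha).2
      have := hD.mem_Ico q' hq' _ hn'
      omega
    · have := (Finset.mem_filter.1 hb).2
      have := hD.mem_Ico q hq _ hn
      omega
    · rw [hD.eq_of_mem q hq q' hq' _ hn hn']

end IsDyadicDecomposition

theorem exists_isDyadicDecomposition {m α β : ℕ} (hm : 1 ≤ m) (hβ : β ≤ 2 ^ m) :
    ∃ D, IsDyadicDecomposition m α β D := by
  induction m, hm using Nat.le_induction generalizing α β with
  | base => exact ⟨_, .one hβ⟩
  | succ m _ ih =>
    obtain ⟨D, hD⟩ := ih (α := (α + 1) / 2) (β := β / 2) (by rw [pow_succ] at hβ; omega)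
    exact hD.succ hβ

/-- The coarser of the two blocks contains `2 ^ s' * c` and `2 ^ s' * c + 2 ^ s`, which lie in
different blocks of the finer level. -/
lemma eq_of_forall_div_pow_eq_iff {m a s s' : ℕ} (ha : a < 2 ^ m) (hs : s ≤ m) (hs' : s' ≤ m)
    (h : ∀ n < 2 ^ m, n / 2 ^ s = a / 2 ^ s ↔ n / 2 ^ s' = a / 2 ^ s') : s = s' := by
  have key : ∀ s s', s < s' → s' ≤ m →
      (∀ n < 2 ^ m, n / 2 ^ s' = a / 2 ^ s' → n / 2 ^ s = a / 2 ^ s) → False := by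
    intro s s' hlt hs' h
    set c := a / 2 ^ s'
    have hwW : 2 ^ s < 2 ^ s' := Nat.pow_lt_pow_right one_lt_two hlt
    have hm : 2 ^ m = 2 ^ (m - s') * 2 ^ s' := by rw [← pow_add, Nat.sub_add_cancel hs']
    have hc : c + 1 ≤ 2 ^ (m - s') := (Nat.div_lt_iff_lt_mul (by positivity)).2 (hm ▸ ha)
    have hcW : (c + 1) * 2 ^ s' ≤ 2 ^ m := hm ▸ Nat.mul_le_mul_right _ hc
    have h0 := h (2 ^ s' * c) (by nlinarith) (Nat.mul_div_cancel_left c (by positivity))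
    have h1 := h (2 ^ s' * c + 2 ^ s) (by nlinarith) (by
      rw [Nat.mul_add_div (by positivity), Nat.div_eq_of_lt hwW, add_zero])
    rw [Nat.add_div_right _ (by positivity)] at h1
    omega
  rcases lt_trichotomy s s' with hlt | heq | hgt
  · exact (key s s' hlt hs' fun n hn => (h n hn).2).elim
  · exact heq
  · exact (key s' s hgt hs fun n hn => (h n hn).1).elim

lemma Monotone.exists_bounds_mem_of_ordConnected {r : ℝ → ℕ} (hr : Monotone r) {N : ℕ}
    (hN : ∀ x, r x < N) {I : Set ℝ} (hI : I.OrdConnected) :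
    ∃ lo hi, hi ≤ N ∧ (∀ z ∈ I, lo ≤ r z ∧ r z ≤ hi) ∧ ∀ z, lo < r z → r z < hi → z ∈ I := by
  rcases I.eq_empty_or_nonempty with rfl | hne
  · exact ⟨0, 0, Nat.zero_le N, fun z hz => hz.elim, fun z h h' => by omega⟩
  have hbdd : BddAbove (r '' I) := ⟨N, by rintro _ ⟨z, -, rfl⟩; exact (hN z).le⟩
  obtain ⟨y₁, hy₁, hlo⟩ := Nat.sInf_mem (hne.image r)
  obtain ⟨y₂, hy₂, hhi⟩ := Nat.sSup_mem (hne.image r) hbdd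
  refine ⟨sInf (r '' I), sSup (r '' I), hhi ▸ (hN y₂).le,
    fun z hz => ⟨Nat.sInf_le (mem_image_of_mem r hz), le_csSup hbdd (mem_image_of_mem r hz)⟩,
    fun z hlz hzh => hI.out hy₁ hy₂ ⟨?_, ?_⟩⟩
  · exact (hr.reflect_lt (hlo ▸ hlz)).le
  · exact (hr.reflect_lt (hhi ▸ hzh)).le

section DyadicBoxes

variable {d : ℕ} (r : Fin d → ℝ → ℕ)

def dyadicBox (q : Fin d → ℕ × ℕ) : Set (Fin d → ℝ) :=
  unitCube d ∩ {x | ∀ j, r j (x j) / 2 ^ (q j).1 = (q j).2}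

def dyadicFamily (m : ℕ) : Finset (Set (Fin d → ℝ)) :=
  (Fintype.piFinset fun _ => Finset.range m ×ˢ Finset.range (2 ^ m)).image (dyadicBox r)

variable {r}

lemma measurableSet_dyadicBox (hr : ∀ j, Monotone (r j)) (q : Fin d → ℕ × ℕ) :
    MeasurableSet (dyadicBox r q) := by
  refine (MeasurableSet.univ_pi fun _ => measurableSet_Icc).inter ?_
  rw [ofPred_forall]
  exact MeasurableSet.iInter fun j =>
    ((measurable_from_nat (f := fun n => n / 2 ^ (q j).1)).comp
      ((hr j).measurable.comp (measurable_pi_apply j))) (measurableSet_singleton (q j).2)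

lemma measurableSet_of_mem_dyadicFamily (hr : ∀ j, Monotone (r j)) {m : ℕ} {S : Set (Fin d → ℝ)}
    (hS : S ∈ dyadicFamily r m) : MeasurableSet S := by
  obtain ⟨q, -, rfl⟩ := Finset.mem_image.1 hS
  exact measurableSet_dyadicBox hr q

lemma update_mem_dyadicBox_iff {q : Fin d → ℕ × ℕ} {x : Fin d → ℝ} (hx : x ∈ dyadicBox r q)
    {j : Fin d} {z : ℝ} (hz : z ∈ Icc (0 : ℝ) 1) :
    Function.update x j z ∈ dyadicBox r q ↔ r j z / 2 ^ (q j).1 = (q j).2 := by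
  refine ⟨fun h => by simpa using h.2 j, fun h => ⟨fun i _ => ?_, fun i => ?_⟩⟩
  · rcases eq_or_ne i j with rfl | hi
    · simpa using hz
    · simpa [hi] using hx.1 i trivial
  · rcases eq_or_ne i j with rfl | hi
    · simpa using h
    · simpa [hi] using hx.2 i

lemma card_filter_mem_dyadicFamily {m : ℕ} (hlt : ∀ j x, r j x < 2 ^ m)
    (hsurj : ∀ j, ∀ n < 2 ^ m, ∃ z ∈ Icc (0 : ℝ) 1, r j z = n) {x : Fin d → ℝ}
    (hx : x ∈ unitCube d) : ((dyadicFamily r m).filter (x ∈ ·)).card = m ^ d := by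
  set label : (Fin d → ℕ) → Fin d → ℕ × ℕ := fun s j => (s j, r j (x j) / 2 ^ s j)
  have hmem : ∀ s, x ∈ dyadicBox r (label s) := fun s => ⟨hx, fun j => rfl⟩
  have hfilter : (dyadicFamily r m).filter (x ∈ ·) =
      (Fintype.piFinset fun _ => Finset.range m).image (dyadicBox r ∘ label) := by
    ext S
    simp only [dyadicFamily, Finset.mem_filter, Finset.mem_image, Fintype.mem_piFinset,
      Finset.mem_product, Finset.mem_range, Function.comp_apply]
    constructor
    · rintro ⟨⟨q, hq, rfl⟩, hxq⟩
      exact ⟨fun j => (q j).1, fun j => (hq j).1,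
        congrArg _ (funext fun j => Prod.ext rfl (hxq.2 j))⟩
    · rintro ⟨s, hs, rfl⟩
      exact ⟨⟨label s, fun j => ⟨hs j, (Nat.div_le_self _ _).trans_lt (hlt j _)⟩, rfl⟩, hmem s⟩
  rw [hfilter, Finset.card_image_of_injOn, Fintype.card_piFinset, Finset.prod_const,
    Finset.card_range, Finset.card_univ, Fintype.card_fin]
  intro s hs s' hs' heq
  simp only [Finset.mem_coe, Fintype.mem_piFinset, Finset.mem_range] at hs hs'
  funext j
  refine eq_of_forall_div_pow_eq_iff (hlt j (x j)) (hs j).le (hs' j).le fun n hn => ?_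
  obtain ⟨z, hz, rfl⟩ := hsurj j n hn
  have h := update_mem_dyadicBox_iff (hmem s) (j := j) hz
  rw [show dyadicBox r (label s) = dyadicBox r (label s') from heq,
    update_mem_dyadicBox_iff (hmem s') hz] at h
  exact h.symm

end DyadicBoxes

lemma measure_iUnion_le_card_mul_ofReal {α ι : Type*} [MeasurableSpace α] [Fintype ι]
    {μ : Measure α} {s : ι → Set α} {c : ℝ} (h : ∀ i, μ (s i) ≤ ENNReal.ofReal c) :
    μ (⋃ i, s i) ≤ ENNReal.ofReal (Fintype.card ι * c) := by
  rw [← nsmul_eq_mul, ENNReal.ofReal_nsmul, ← Finset.card_univ]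
  exact (measure_iUnion_fintype_le _ _).trans (Finset.sum_le_card_nsmul _ _ _ fun i _ => h i)

lemma ofReal_one_sub_le_measure_of_subset_union {α : Type*} [MeasurableSpace α] {μ : Measure α}
    {A S B : Set α} {ε : ℝ} (hA : μ A = 1) (hsub : A ⊆ S ∪ B) (hB : μ B ≤ ENNReal.ofReal ε)
    (hε : 0 ≤ ε) : ENNReal.ofReal (1 - ε) ≤ μ S := by
  rw [ENNReal.ofReal_sub _ hε, ENNReal.ofReal_one, tsub_le_iff_right, ← hA]
  exact (measure_mono hsub).trans ((measure_union_le _ _).trans (add_le_add_right hB _))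

lemma pairwise_disjoint_biUnion {α ι : Type*} [Fintype ι] {R : ι → Set α}
    (hR : univ.PairwiseDisjoint R) {T : ι → Finset (Set α)}
    (hT : ∀ i, (T i : Set (Set α)).Pairwise (Disjoint · ·)) (hTR : ∀ i, ∀ S ∈ T i, S ⊆ R i) :
    (Finset.univ.biUnion T : Set (Set α)).Pairwise (Disjoint · ·) := by
  intro S hS S' hS' hne
  simp only [Finset.coe_biUnion, Finset.coe_univ, mem_univ, iUnion_true, mem_iUnion,
    Finset.mem_coe] at hS hS'
  obtain ⟨i, hi⟩ := hS
  obtain ⟨i', hi'⟩ := hS'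
  rcases eq_or_ne i i' with rfl | hii
  · exact hT i hi hi' hne
  · exact (hR (mem_univ i) (mem_univ i') hii).mono (hTR i S hi) (hTR i' S' hi')

section DyadicCover

variable {d m : ℕ} {r : Fin d → ℝ → ℕ}

lemma exists_dyadicBoxes_subset_pi (hm : 1 ≤ m) (hmono : ∀ j, Monotone (r j))
    (hlt : ∀ j x, r j x < 2 ^ m) {I : Fin d → Set ℝ} (hI : ∀ j, (I j).OrdConnected) :
    ∃ T ⊆ dyadicFamily r m, T.card ≤ (2 * m) ^ d ∧
      (T : Set (Set (Fin d → ℝ))).Pairwise (Disjoint · ·) ∧ (∀ S ∈ T, S ⊆ univ.pi I) ∧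
      ∃ lo hi : Fin d → ℕ,
        unitCube d ∩ univ.pi I ⊆ ⋃₀ ↑T ∪ ⋃ j, (fun x => r j (x j)) ⁻¹' {lo j, hi j} := by
  choose lo hi hhi hbounds hinner using
    fun j => (hmono j).exists_bounds_mem_of_ordConnected (hlt j) (hI j)
  choose D hD using fun j => exists_isDyadicDecomposition (α := lo j + 1) hm (hhi j)
  refine ⟨(Fintype.piFinset D).image (dyadicBox r),
    Finset.image_subset_image (Fintype.piFinset_subset _ _ fun j => (hD j).subset), ?_, ?_, ?_,
    lo, hi, ?_⟩
  · calc _ ≤ (Fintype.piFinset D).card := Finset.card_image_le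
      _ = ∏ j, (D j).card := Fintype.card_piFinset D
      _ ≤ (2 * m) ^ d := by
        simpa using Finset.prod_le_pow_card Finset.univ _ _ fun j _ => (hD j).card_le
  · simp only [Finset.coe_image, Set.Pairwise, Set.mem_image, Finset.mem_coe,
      Fintype.mem_piFinset]
    rintro _ ⟨q, hq, rfl⟩ _ ⟨q', hq', rfl⟩ hne
    obtain ⟨j, hj⟩ : ∃ j, q j ≠ q' j := by
      by_contra! h
      exact hne (congrArg _ (funext h))
    exact Set.disjoint_left.2 fun y hy hy' =>
      hj ((hD j).eq_of_mem _ (hq j) _ (hq' j) _ (hy.2 j) (hy'.2 j))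
  · simp only [Finset.mem_image, Fintype.mem_piFinset]
    rintro _ ⟨q, hq, rfl⟩ y hy j -
    have := (hD j).mem_Ico _ (hq j) _ (hy.2 j)
    exact hinner j _ (by omega) this.2
  · rintro x ⟨hxcube, hxI⟩
    by_cases hin : ∀ j, lo j < r j (x j) ∧ r j (x j) < hi j
    · choose q hq hxq using fun j => (hD j).exists_mem _ (hin j).1 (hin j).2
      exact Or.inl ⟨dyadicBox r q,
        Finset.mem_image_of_mem _ (Fintype.mem_piFinset.2 hq), hxcube, hxq⟩
    · push Not at hin
      obtain ⟨j, hj⟩ := hin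
      have := hbounds j _ (hxI j trivial)
      refine Or.inr (mem_iUnion.2 ⟨j, ?_⟩)
      simp only [mem_preimage, mem_insert_iff, mem_singleton_iff]
      omega

variable {P : Measure (Fin d → ℝ)}

lemma measure_iUnion_preimage_rank_le {N : ℕ} (hr : ∀ j, IsQuantileRank (P.map (· j)) N (r j))
    (lo hi : Fin d → ℕ) :
    P (⋃ j, (fun x => r j (x j)) ⁻¹' {lo j, hi j}) ≤ ENNReal.ofReal (d * (2 / N)) := by
  refine (measure_iUnion_le_card_mul_ofReal fun j => ?_).trans_eq (by rw [Fintype.card_fin])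
  calc P ((fun x => r j (x j)) ⁻¹' {lo j, hi j})
      ≤ P.map (· j) (r j ⁻¹' {lo j} ∪ r j ⁻¹' {hi j}) := by
        rw [← preimage_union, ← insert_eq]
        exact Measure.le_map_apply (measurable_pi_apply j).aemeasurable _
    _ ≤ ENNReal.ofReal (1 / N) + ENNReal.ofReal (1 / N) := (measure_union_le _ _).trans
        (add_le_add ((hr j).measure_preimage_le _) ((hr j).measure_preimage_le _))
    _ = ENNReal.ofReal (2 / N) := by
        rw [← ENNReal.ofReal_add (by positivity) (by positivity)]
        ring_nf

theorem isObliviousCovering_dyadicFamily {k : ℕ} {ε : ℝ} (hm : 1 ≤ m)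
    (hr : ∀ j, IsQuantileRank (P.map (· j)) (2 ^ m) (r j)) (hP : P (unitCube d) = 1)
    (hε : 2 * k * d / 2 ^ m ≤ ε) :
    IsObliviousCovering d k (2 ^ d * m ^ d) (m ^ d) ε P (dyadicFamily r m) := by
  refine ⟨fun S => measurableSet_of_mem_dyadicFamily fun j => (hr j).monotone,
    fun x hx => card_filter_mem_dyadicFamily (fun j => (hr j).lt) (fun j => (hr j).surjOn) hx,
    fun R hR hdisj hunion => ?_⟩
  choose I hI hRI using hR
  choose T hTF hTcard hTdisj hTR lo hi hcover using fun i =>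
    exists_dyadicBoxes_subset_pi hm (fun j => (hr j).monotone) (fun j => (hr j).lt) (hI i)
  have hTR' : ∀ i, ∀ S ∈ T i, S ⊆ R i := fun i S hS => hRI i ▸ hTR i S hS
  set Sf := Finset.univ.biUnion T
  have hmem : ∀ {S}, S ∈ Sf ↔ ∃ i, S ∈ T i := by simp [Sf]
  refine ⟨Sf, Finset.biUnion_subset.2 fun i _ => hTF i, ?_,
    pairwise_disjoint_biUnion hdisj hTdisj hTR', ?_, fun S hS => (hmem.1 hS).imp fun i hi => hTR' i S hi⟩
  · calc Sf.card ≤ ∑ i, (T i).card := Finset.card_biUnion_le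
      _ ≤ ∑ _i : Fin k, (2 * m) ^ d := Finset.sum_le_sum fun i _ => hTcard i
      _ = k * (2 ^ d * m ^ d) := by simp [mul_pow]
  have hsub : unitCube d ⊆
      ⋃₀ ↑Sf ∪ ⋃ i, ⋃ j, (fun x => r j (x j)) ⁻¹' {lo i j, hi i j} := by
    intro x hx
    obtain ⟨i, hxi⟩ := mem_iUnion.1 (hunion ▸ hx)
    rcases hcover i ⟨hx, hRI i ▸ hxi⟩ with h | h
    · exact Or.inl (sUnion_mono (fun S hS => hmem.2 ⟨i, hS⟩) h)
    · exact Or.inr (mem_iUnion.2 ⟨i, h⟩)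
  have hbad : P (⋃ i, ⋃ j, (fun x => r j (x j)) ⁻¹' {lo i j, hi i j}) ≤ ENNReal.ofReal ε := by
    refine (measure_iUnion_le_card_mul_ofReal fun i =>
      measure_iUnion_preimage_rank_le hr (lo i) (hi i)).trans (ENNReal.ofReal_le_ofReal ?_)
    convert hε using 1
    rw [Fintype.card_fin, Nat.cast_pow, Nat.cast_ofNat]
    ring
  exact ofReal_one_sub_le_measure_of_subset_union hP hsub hbad (le_trans (by positivity) hε)

end DyadicCover

theorem exists_isQuantileRank_map_eval {d N : ℕ} (P : Measure (Fin d → ℝ)) [IsProbabilityMeasure P]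
    (hP : P (unitCube d) = 1) (hatomless : ∀ j : Fin d, ∀ a : ℝ, P.map (fun x => x j) {a} = 0)
    (hN : 0 < N) : ∃ r : Fin d → ℝ → ℕ, ∀ j, IsQuantileRank (P.map (· j)) N (r j) := by
  refine ⟨fun j => quantileRank (P.map (· j)) N, fun j => ?_⟩
  have : IsProbabilityMeasure (P.map (· j)) :=
    Measure.isProbabilityMeasure_map (measurable_pi_apply j).aemeasurable
  have : NullSingletonClass (P.map (· j)) := ⟨hatomless j⟩
  refine isQuantileRank_quantileRank (le_antisymm prob_le_one ?_) hN
  rw [Measure.map_apply (measurable_pi_apply j) measurableSet_Icc, ← hP]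
  exact measure_mono fun x hx => hx j trivial

theorem oblivious_covering_exists
    (d k : ℕ) (hd : 1 ≤ d) (hk : 1 ≤ k) (ε : ℝ) (hε : 0 < ε) (hε1 : ε ≤ 1)
    (P : Measure (Fin d → ℝ)) [IsProbabilityMeasure P] (hsupp : P (unitCube d) = 1)
    (hatomless : ∀ j : Fin d, ∀ a : ℝ, P.map (fun x => x j) {a} = 0) :
    ∃ F, IsObliviousCovering d k
      (2 ^ d * (⌈Real.logb 2 (4 * k * d / ε)⌉₊ : ℕ) ^ d)
      ((⌈Real.logb 2 (4 * k * d / ε)⌉₊ : ℕ) ^ d) ε P F := by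
  set m := ⌈Real.logb 2 (4 * k * d / ε)⌉₊
  have hkd : (1 : ℝ) ≤ k * d := one_le_mul_of_one_le_of_one_le (by exact_mod_cast hk)
    (by exact_mod_cast hd)
  have hpos : 0 < 4 * k * d / ε := by positivity
  have hm : 1 ≤ m := Nat.one_le_ceil_iff.2 <| Real.logb_pos one_lt_two <|
    (one_lt_div hε).2 (by linarith)
  have h2m : 4 * k * d / ε ≤ 2 ^ m := by
    rw [← Real.rpow_natCast, ← Real.logb_le_iff_le_rpow one_lt_two hpos]
    exact Nat.le_ceil _
  obtain ⟨r, hr⟩ := exists_isQuantileRank_map_eval P hsupp hatomless (pow_pos two_pos m)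
  refine ⟨dyadicFamily r m, isObliviousCovering_dyadicFamily hm hr hsupp ?_⟩
  rw [div_le_iff₀ hε] at h2m
  rw [div_le_iff₀ (by positivity)]
  linarith

end
end

section
/- Let p and q be probability measures on a measurable space such that q is absolutely continuous with respect to p, with Radon–Nikodym derivative f = dq/dp. If there exists a measurable set A with q(A) ≥ 2/3 and p(A) ≤ 1/3, then ∫ f² dp ≥ 4/3. -/
/-!
Writing `f = dq/dp`, AM-GM gives `4 f ≤ f² + 4` pointwise. Integrating over `A` against `p` yields
`4 q(A) ≤ ∫_A f² dp + 4 p(A) ≤ ∫ f² dp + 4 p(A)`, so `8/3 ≤ ∫ f² dp + 4/3`.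
-/

open MeasureTheory
open scoped ENNReal

theorem ENNReal.two_mul_mul_le_sq_add_sq (a b : ℝ≥0∞) : 2 * a * b ≤ a ^ 2 + b ^ 2 := by
  rcases eq_or_ne a ⊤ with rfl | ha
  · simp
  rcases eq_or_ne b ⊤ with rfl | hb
  · simp
  lift a to NNReal using ha
  lift b to NNReal using hb
  exact_mod_cast two_mul_le_add_sq a b

theorem MeasureTheory.Measure.two_mul_mul_le_lintegral_rnDeriv_sq_add
    {Ω : Type*} [MeasurableSpace Ω] {μ ν : Measure Ω} [μ.HaveLebesgueDecomposition ν]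
    [SFinite ν] (hμν : μ ≪ ν) (s : Set Ω) (c : ℝ≥0∞) :
    2 * c * μ s ≤ ∫⁻ x, μ.rnDeriv ν x ^ 2 ∂ν + c ^ 2 * ν s := by
  calc 2 * c * μ s = ∫⁻ x in s, 2 * c * μ.rnDeriv ν x ∂ν := by
        rw [lintegral_const_mul _ (μ.measurable_rnDeriv ν), μ.setLIntegral_rnDeriv hμν]
    _ ≤ ∫⁻ x in s, (μ.rnDeriv ν x ^ 2 + c ^ 2) ∂ν := by
        gcongr with x
        rw [mul_right_comm]
        exact ENNReal.two_mul_mul_le_sq_add_sq _ _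
    _ = ∫⁻ x in s, μ.rnDeriv ν x ^ 2 ∂ν + c ^ 2 * ν s := by
        rw [lintegral_add_right _ measurable_const, setLIntegral_const]
    _ ≤ ∫⁻ x, μ.rnDeriv ν x ^ 2 ∂ν + c ^ 2 * ν s := by
        gcongr ?_ + _
        exact setLIntegral_le_lintegral _ _

theorem chi_square_lower_bound_of_distinguishable_general
    {Ω : Type*} [MeasurableSpace Ω] (p q : Measure Ω)
    [IsProbabilityMeasure p] [IsProbabilityMeasure q]
    (hac : q ≪ p)
    (A : Set Ω)
    (hqA : 2 / 3 ≤ q A) (hpA : p A ≤ 1 / 3) :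
    4 / 3 ≤ ∫⁻ x, (q.rnDeriv p x) ^ 2 ∂p := by
  set χ := ∫⁻ x, (q.rnDeriv p x) ^ 2 ∂p
  have h : 4 / 3 + 4 / 3 ≤ χ + 4 / 3 := calc
    4 / 3 + 4 / 3 = (2 * 2 * (2 / 3) : ℝ≥0∞) := by
      rw [ENNReal.div_add_div_same, ← mul_div_assoc]; norm_num
    _ ≤ 2 * 2 * q A := by gcongr
    _ ≤ χ + 2 ^ 2 * p A := Measure.two_mul_mul_le_lintegral_rnDeriv_sq_add hac A 2
    _ ≤ χ + 2 ^ 2 * (1 / 3) := by gcongr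
    _ = χ + 4 / 3 := by rw [← mul_div_assoc]; norm_num
  exact (ENNReal.add_le_add_iff_right (ENNReal.div_ne_top (by norm_num) (by norm_num))).mp h

theorem chi_square_lower_bound_of_distinguishable
    {Ω : Type*} [MeasurableSpace Ω] (p q : Measure Ω)
    [IsProbabilityMeasure p] [IsProbabilityMeasure q]
    (hac : q ≪ p)
    (A : Set Ω) (hA : MeasurableSet A)
    (hqA : 2 / 3 ≤ q A) (hpA : p A ≤ 1 / 3) :
    4 / 3 ≤ ∫⁻ x, (q.rnDeriv p x) ^ 2 ∂p :=
  chi_square_lower_bound_of_distinguishable_general p q hac A hqA hpA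
end

section
/- Let p be a probability distribution on {1,…,n}, let k ≥ 1 be an integer, and let S be the multiset consisting of ⌊k·p(i)⌋ copies of each i ∈ {1,…,n}. Then: (i) |S| = Σ_{i=1}^n ⌊k·p(i)⌋ ≤ k; (ii) every atom of the split distribution p_S has mass at most 1/k, i.e., p(i)/(1+⌊k·p(i)⌋) ≤ 1/k for all i; and (iii) consequently the squared ℓ₂-norm of p_S satisfies ‖p_S‖₂² = Σ_{i=1}^n p(i)²/(1+⌊k·p(i)⌋) ≤ 1/k. -/
open scoped BigOperators

/-- Properties of the flattening multiset `S` consisting of `⌊k·p(i)⌋` copies of each `i`: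
its size is at most `k`, each atom of the split distribution `p_S` has mass at most `1/k`,
and consequently the squared `ℓ₂`-norm of `p_S` is at most `1/k`. -/
theorem flattening_multiset_properties
    (n k : ℕ) (hn : 1 ≤ n) (hk : 1 ≤ k)
    (p : Fin n → ℝ) (hp0 : ∀ i, 0 ≤ p i) (hp1 : ∑ i, p i = 1) :
    (∑ i, ⌊(k : ℝ) * p i⌋₊) ≤ k ∧
    (∀ i, p i / (1 + (⌊(k : ℝ) * p i⌋₊ : ℝ)) ≤ 1 / (k : ℝ)) ∧
    (∑ i, p i ^ 2 / (1 + (⌊(k : ℝ) * p i⌋₊ : ℝ))) ≤ 1 / (k : ℝ) := by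
  have hk0 : (0:ℝ) < k := by exact_mod_cast hk
  have hpos : ∀ i, (0:ℝ) < 1 + (⌊(k : ℝ) * p i⌋₊ : ℝ) := fun i => by positivity
  have h2 : ∀ i, p i / (1 + (⌊(k : ℝ) * p i⌋₊ : ℝ)) ≤ 1 / (k : ℝ) := by
    intro i
    rw [div_le_div_iff₀ (hpos i) hk0]
    have := Nat.lt_floor_add_one ((k:ℝ) * p i)
    nlinarith [hp0 i]
  refine ⟨?_, h2, ?_⟩
  · have : ((∑ i, ⌊(k : ℝ) * p i⌋₊ : ℕ) : ℝ) ≤ (k:ℝ) := by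
      push_cast
      calc (∑ i, (⌊(k : ℝ) * p i⌋₊ : ℝ)) ≤ ∑ i, (k:ℝ) * p i :=
            Finset.sum_le_sum fun i _ => Nat.floor_le (mul_nonneg (le_of_lt hk0) (hp0 i))
        _ = k := by rw [← Finset.mul_sum, hp1, mul_one]
    exact_mod_cast this
  · calc (∑ i, p i ^ 2 / (1 + (⌊(k : ℝ) * p i⌋₊ : ℝ)))
        ≤ ∑ i, p i * (1 / (k:ℝ)) := by
          refine Finset.sum_le_sum fun i _ => ?_
          rw [pow_two, mul_div_assoc]
          exact mul_le_mul_of_nonneg_left (h2 i) (hp0 i)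
      _ = 1 / (k:ℝ) := by rw [← Finset.sum_mul, hp1, one_mul]
end

section
/- Let p and q be probability distributions on {1,…,n}, let k ≥ 1 be an integer, let ε > 0, and let S be a multiset of elements of {1,…,n} with m = |S| ≤ k. If ‖p − q‖_{1,k} ≥ ε, then the split distributions satisfy ‖p_S − q_S‖₂² ≥ ε²/(2k), i.e., Σ_{(i,j)} (p_S(i,j) − q_S(i,j))² ≥ ε²/(2k). -/
open scoped BigOperators

/-- `‖p − q‖_{1,k} ≥ ε`: some set of at most `k` domain elements contributes at least `ε`
to the `ℓ₁`-distance between `p` and `q` (equivalently, the sum of the `k` largest values of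
`|p i − q i|` is at least `ε`). -/
def L1kDistGe (n k : ℕ) (p q : Fin n → ℝ) (ε : ℝ) : Prop :=
  ∃ A : Finset (Fin n), A.card ≤ k ∧ ε ≤ ∑ i ∈ A, |p i - q i|

/-- If `‖p − q‖_{1,k} ≥ ε` and `S` is a multiset of size at most `k`, then the split
distributions `p_S`, `q_S` (on pairs `(i, j)` with `j < 1 + count of i in S`, where
`p_S(i,j) = p(i)/(1 + S.count i)`) satisfy `‖p_S − q_S‖₂² ≥ ε²/(2k)`. -/
theorem split_distributions_l2_lower_bound
    (n k : ℕ) (hn : 1 ≤ n) (hk : 1 ≤ k)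
    (p q : Fin n → ℝ)
    (hp0 : ∀ i, 0 ≤ p i) (hp1 : ∑ i, p i = 1)
    (hq0 : ∀ i, 0 ≤ q i) (hq1 : ∑ i, q i = 1)
    (ε : ℝ) (hε : 0 < ε)
    (S : Multiset (Fin n)) (hS : Multiset.card S ≤ k)
    (hfar : L1kDistGe n k p q ε) :
    ε ^ 2 / (2 * k) ≤
      ∑ i : Fin n, ∑ _j ∈ Finset.range (1 + S.count i),
        (p i / (1 + (S.count i : ℝ)) - q i / (1 + (S.count i : ℝ))) ^ 2 := by
  obtain ⟨A, hAcard, hAsum⟩ := hfar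
  have ha : ∀ i : Fin n, (0:ℝ) < 1 + (S.count i : ℝ) := fun i => by positivity
  have hrhs : ∀ i : Fin n, ∑ _j ∈ Finset.range (1 + S.count i),
      (p i / (1 + (S.count i : ℝ)) - q i / (1 + (S.count i : ℝ))) ^ 2
      = (p i - q i) ^ 2 / (1 + (S.count i : ℝ)) := by
    intro i
    rw [Finset.sum_const, Finset.card_range, div_sub_div_same, div_pow, nsmul_eq_mul]
    have h := (ha i).ne'
    push_cast
    field_simp
  rw [Finset.sum_congr rfl fun i _ => hrhs i]
  set T : ℝ := ∑ i : Fin n, (p i - q i) ^ 2 / (1 + (S.count i : ℝ)) with hT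
  have hTA : ∑ i ∈ A, (p i - q i) ^ 2 / (1 + (S.count i : ℝ)) ≤ T := by
    apply Finset.sum_le_sum_of_subset_of_nonneg (Finset.subset_univ A)
    intro i _ _
    positivity
  -- Cauchy–Schwarz on A
  have hCS := Finset.sum_mul_sq_le_sq_mul_sq A
    (fun i => |p i - q i| / Real.sqrt (1 + (S.count i : ℝ)))
    (fun i => Real.sqrt (1 + (S.count i : ℝ)))
  have hfg : ∀ i ∈ A,
      |p i - q i| / Real.sqrt (1 + (S.count i : ℝ)) * Real.sqrt (1 + (S.count i : ℝ))
      = |p i - q i| := by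
    intro i _
    exact div_mul_cancel₀ _ (Real.sqrt_ne_zero'.mpr (ha i)).symm.symm
  have hf2 : ∀ i ∈ A,
      (|p i - q i| / Real.sqrt (1 + (S.count i : ℝ))) ^ 2
      = (p i - q i) ^ 2 / (1 + (S.count i : ℝ)) := by
    intro i _
    rw [div_pow, sq_abs, Real.sq_sqrt (ha i).le]
  have hg2 : ∀ i ∈ A,
      (Real.sqrt (1 + (S.count i : ℝ))) ^ 2 = 1 + (S.count i : ℝ) := by
    intro i _
    exact Real.sq_sqrt (ha i).le
  rw [Finset.sum_congr rfl hfg, Finset.sum_congr rfl hf2, Finset.sum_congr rfl hg2] at hCS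
  -- bound ∑_{i∈A} (1 + count i) ≤ 2k
  have hcount : ∑ i : Fin n, (S.count i : ℝ) = (Multiset.card S : ℝ) := by
    rw [← Nat.cast_sum]
    congr 1
    rw [← Multiset.toFinset_sum_count_eq S]
    exact (Finset.sum_subset (Finset.subset_univ _) fun i _ hi =>
      Multiset.count_eq_zero.mpr fun h => hi (Multiset.mem_toFinset.mpr h)).symm
  have hcountA : ∑ i ∈ A, (S.count i : ℝ) ≤ (k : ℝ) := by
    calc ∑ i ∈ A, (S.count i : ℝ) ≤ ∑ i : Fin n, (S.count i : ℝ) :=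
          Finset.sum_le_sum_of_subset_of_nonneg (Finset.subset_univ A)
            (fun i _ _ => by positivity)
      _ = (Multiset.card S : ℝ) := hcount
      _ ≤ (k : ℝ) := by exact_mod_cast hS
  have hsumA : ∑ i ∈ A, (1 + (S.count i : ℝ)) ≤ 2 * k := by
    rw [Finset.sum_add_distrib, Finset.sum_const, nsmul_eq_mul, mul_one]
    have h1 : (A.card : ℝ) ≤ (k : ℝ) := by exact_mod_cast hAcard
    linarith
  have hε2 : ε ^ 2 ≤ (∑ i ∈ A, |p i - q i|) ^ 2 :=
    pow_le_pow_left₀ hε.le hAsum 2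
  have hk0 : (0:ℝ) < 2 * k := by positivity
  have hTnn : 0 ≤ ∑ i ∈ A, (p i - q i) ^ 2 / (1 + (S.count i : ℝ)) :=
    Finset.sum_nonneg fun i _ => by positivity
  have : ε ^ 2 ≤ T * (2 * k) := by
    calc ε ^ 2 ≤ (∑ i ∈ A, |p i - q i|) ^ 2 := hε2
      _ ≤ (∑ i ∈ A, (p i - q i) ^ 2 / (1 + (S.count i : ℝ))) *
            ∑ i ∈ A, (1 + (S.count i : ℝ)) := hCS
      _ ≤ T * (2 * k) := mul_le_mul hTA hsumA
            (Finset.sum_nonneg fun i _ => (ha i).le) (hTnn.trans hTA)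
  rw [div_le_iff₀ hk0]
  linarith
end
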